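/- arXiv:1201.6444 — 3 statements merged into one kernel-verified Lean document; each statement's English description precedes it below -/
import Mathlib

section
/- For all nonnegative integers a, b, n with a + b ≤ n, the quantity Δ₂(n,a,b) := 2 · ∑_{j=1}^{b} (1/(n + 2 − j − a)) · (b − 1 + κ_{j−1} + κ_{b−j} − κ_b) is nonnegative: Δ₂(n,a,b) ≥ 0. -/
open Finset Filter Topology

/-- The `n`-th harmonic number `H_n = ∑_{i=1}^n 1/i`. -/
noncomputable def H (n : ℕ) : ℝ := ∑ i ∈ Finset.range n, (1 : ℝ) / (i + 1)

/-- `κ_n = 2(n+1)H_n - 4n`, the mean number of key comparisons for QuickSort on `n` keys. -/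
noncomputable def κ (n : ℕ) : ℝ := 2 * (n + 1) * H n - 4 * n

/-!
After the shift `i = j - 1` the sum is `∑_{i<b} F_i w_i` with `w_i = 1/(M - i)`, `M = n + 1 - a`,
and `F_i = κ_i + κ_{b-1-i} + b - 1 - κ_b`. As `F` is symmetric under `i ↦ b - 1 - i`, twice the sum
is `∑ F_i S_i` with `S_i = w_i + w_{b-1-i}`. Both `κ` and `w` have nondecreasing increments, so `F`
and `S` are symmetric and nondecreasing away from the centre; hence they monovary, and Chebyshev's
sum inequality gives `b ∑ F_i S_i ≥ (∑ F_i)(∑ S_i) = 0`, where `∑ F_i = 0` is the QuickSort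
recurrence `b κ_b = b(b - 1) + 2 ∑_{i<b} κ_i`.
-/

theorem MonovaryOn.sum_mul_nonneg_of_sum_eq_zero {ι α : Type*} [Semiring α] [LinearOrder α]
    [IsStrictOrderedRing α] [ExistsAddOfLE α] {s : Finset ι} {f g : ι → α}
    (hfg : MonovaryOn f g s) (hf : ∑ i ∈ s, f i = 0) : 0 ≤ ∑ i ∈ s, f i * g i := by
  have cheb := hfg.sum_mul_sum_le_card_mul_sum
  rw [hf, zero_mul] at cheb
  rcases s.eq_empty_or_nonempty with rfl | hs
  · simp
  · exact nonneg_of_mul_nonneg_right cheb (Nat.cast_pos.mpr hs.card_pos)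

section Reflect

variable {φ ψ : ℕ → ℝ} {c : ℕ}

theorem monotoneOn_add_reflect (hφ : MonotoneOn (fun k ↦ φ (k + 1) - φ k) (Set.Iio c)) :
    MonotoneOn (fun i ↦ φ i + φ (c - i)) (Set.Icc (c / 2) c) := by
  refine monotoneOn_of_le_add_one Set.ordConnected_Icc fun i _ hi hi' ↦ ?_
  simp only [Set.mem_Icc] at hi hi'
  have hinc : φ (c - (i + 1) + 1) - φ (c - (i + 1)) ≤ φ (i + 1) - φ i :=
    hφ (Set.mem_Iio.mpr (by omega)) (Set.mem_Iio.mpr (by omega)) (by omega)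
  rw [show c - i = c - (i + 1) + 1 by omega]
  linarith

theorem monovaryOn_add_reflect (hφ : MonotoneOn (fun k ↦ φ (k + 1) - φ k) (Set.Iio c))
    (hψ : MonotoneOn (fun k ↦ ψ (k + 1) - ψ k) (Set.Iio c)) :
    MonovaryOn (fun i ↦ φ i + φ (c - i)) (fun i ↦ ψ i + ψ (c - i)) (Set.Iic c) := by
  -- both symmetrizations take each value already on the upper half `[c / 2, c]`
  have fold (χ : ℕ → ℝ) {i : ℕ} (hi : i ≤ c) :
      χ (max i (c - i)) + χ (c - max i (c - i)) = χ i + χ (c - i) := by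
    rcases le_total i (c - i) with h | h
    · rw [max_eq_right h, Nat.sub_sub_self hi, add_comm]
    · rw [max_eq_left h]
  have mem {i : ℕ} (hi : i ≤ c) : max i (c - i) ∈ Set.Icc (c / 2) c := by
    simp only [Set.mem_Icc]
    omega
  intro i hi j hj hlt
  rw [Set.mem_Iic] at hi hj
  dsimp only at hlt ⊢
  rw [← fold ψ hi, ← fold ψ hj] at hlt
  rw [← fold φ hi, ← fold φ hj]
  refine monotoneOn_add_reflect hφ (mem hi) (mem hj) (le_of_not_ge fun hle ↦ ?_)
  exact (monotoneOn_add_reflect hψ (mem hj) (mem hi) hle).not_gt hlt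

end Reflect

theorem monotoneOn_one_div_sub_increments {M : ℝ} {c : ℕ} (hc : (c : ℝ) < M) :
    MonotoneOn (fun k : ℕ ↦ 1 / (M - ↑(k + 1)) - 1 / (M - k)) (Set.Iio c) := by
  intro k hk l hl hkl
  simp only [Set.mem_Iio] at hk hl
  have hl' : (l : ℝ) + 1 < M := by
    have : ((l + 1 : ℕ) : ℝ) ≤ c := by exact_mod_cast hl
    push_cast at this
    linarith
  have hkl' : (k : ℝ) ≤ l := by exact_mod_cast hkl
  have increment (m : ℕ) (hm : (m : ℝ) + 1 < M) :
      1 / (M - ↑(m + 1)) - 1 / (M - m) = 1 / ((M - m - 1) * (M - m)) := by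
    rw [div_sub_div _ _ (by push_cast; linarith) (by linarith)]
    congr 1 <;> push_cast <;> ring
  dsimp only
  rw [increment k (by linarith), increment l hl']
  apply one_div_le_one_div_of_le (by nlinarith)
  nlinarith

theorem H_succ (n : ℕ) : H (n + 1) = H n + 1 / (n + 1) := by
  simp [H, sum_range_succ]

theorem H_monotone : Monotone H :=
  monotone_nat_of_le_succ fun n ↦ by rw [H_succ]; exact le_add_of_nonneg_right (by positivity)

theorem kappa_succ_sub (n : ℕ) : κ (n + 1) - κ n = 2 * (H (n + 1) - 1) := by
  have : (n : ℝ) + 1 ≠ 0 := by positivity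
  simp only [κ, H_succ]
  push_cast
  field_simp
  ring

theorem kappa_increments_monotone : Monotone fun n ↦ κ (n + 1) - κ n := fun m n hmn ↦ by
  simp only [kappa_succ_sub]
  linarith [H_monotone (Nat.succ_le_succ hmn)]

theorem mul_kappa_eq (n : ℕ) : n * κ n = n * (n - 1) + 2 * ∑ i ∈ range n, κ i := by
  induction n with
  | zero => simp
  | succ n ih =>
    have hstep : ((n : ℝ) + 1) * κ (n + 1) = (n + 2) * κ n + 2 * n := by
      have : (n : ℝ) + 1 ≠ 0 := by positivity
      simp only [κ, H_succ]
      push_cast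
      field_simp
      ring
    rw [sum_range_succ]
    push_cast
    linarith

theorem delta2_nonneg (a b n : ℕ) (h : a + b ≤ n) :
    0 ≤ 2 * ∑ j ∈ Finset.Icc 1 b,
      (1 / ((n : ℝ) + 2 - (j : ℝ) - (a : ℝ))) *
        ((b : ℝ) - 1 + κ (j - 1) + κ (b - j) - κ b) := by
  set M : ℝ := n + 1 - a
  set w : ℕ → ℝ := fun i ↦ 1 / (M - i)
  set F : ℕ → ℝ := fun i ↦ κ i + κ (b - 1 - i) + (b - 1 - κ b)
  have hreindex : ∑ j ∈ Icc 1 b, 1 / ((n : ℝ) + 2 - j - a) * (b - 1 + κ (j - 1) + κ (b - j) - κ b)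
      = ∑ i ∈ range b, F i * w i := by
    rw [← Ico_add_one_right_eq_Icc, sum_Ico_eq_sum_range, Nat.add_sub_cancel]
    refine sum_congr rfl fun i hi ↦ ?_
    rw [mem_range] at hi
    simp only [F, w, M, Nat.add_sub_cancel_left, show b - (1 + i) = b - 1 - i by omega]
    push_cast
    ring
  have hsymm : 2 * ∑ i ∈ range b, F i * w i = ∑ i ∈ range b, F i * (w i + w (b - 1 - i)) := by
    have hreflect : ∑ i ∈ range b, F i * w i = ∑ i ∈ range b, F i * w (b - 1 - i) := by
      rw [← sum_range_reflect]
      refine sum_congr rfl fun i hi ↦ ?_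
      rw [mem_range] at hi
      simp only [F, show b - 1 - (b - 1 - i) = i by omega]
      ring
    rw [two_mul]
    nth_rw 2 [hreflect]
    simp only [mul_add, sum_add_distrib]
  have hsum : ∑ i ∈ range b, F i = 0 := by
    simp only [F, sum_add_distrib, sum_range_reflect κ b, sum_const, card_range, nsmul_eq_mul]
    linarith [mul_kappa_eq b]
  have hmono : MonovaryOn F (fun i ↦ w i + w (b - 1 - i)) (range b) := by
    have hM : ((b - 1 : ℕ) : ℝ) < M := by
      have : ((b - 1 : ℕ) : ℝ) ≤ b := by exact_mod_cast Nat.sub_le b 1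
      have : (a : ℝ) + b ≤ n := by exact_mod_cast h
      linarith
    refine ((monovaryOn_add_reflect (kappa_increments_monotone.monotoneOn _)
      (monotoneOn_one_div_sub_increments hM)).comp_monotone_on_left
      (monotone_id.add_const ((b : ℝ) - 1 - κ b))).subset fun i hi ↦ ?_
    simp only [coe_range, Set.mem_Iio, Set.mem_Iic] at hi ⊢
    omega
  rw [hreindex, hsymm]
  exact hmono.sum_mul_nonneg_of_sum_eq_zero hsum
end

section
/- For every fixed nonnegative integer b, the sums ∑_{j=1}^{b} κ_{m−j} · (b − 1 + κ_{j−1} + κ_{b−j} − κ_b) tend to 0 as m → ∞. -/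
open Finset Filter Topology

/-!
The coefficients `c_j = b - 1 + κ_{j-1} + κ_{b-j} - κ_b` satisfy `∑ c_j = 0` and, being symmetric
under `j ↦ b + 1 - j`, also `∑ j c_j = 0`: they annihilate every affine function of `j`.
Since `κ_{n+1} - κ_n = 2H_{n+1} - 2` and `H_m - H_{m-i} → 0`, for fixed `j` we have
`κ_{m-j} = κ_m - j (2H_m - 2) + o(1)`, an affine function of `j` up to `o(1)`.
-/

theorem tendsto_sum_mul_of_affine_approx {ι : Type*} {l : Filter ℕ} (s : Finset ι)
    {c x : ι → ℝ} {f : ι → ℕ → ℝ} {A B : ℕ → ℝ}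
    (hc : ∑ i ∈ s, c i = 0) (hxc : ∑ i ∈ s, x i * c i = 0)
    (hf : ∀ i ∈ s, Tendsto (fun m => f i m - (A m - x i * B m)) l (𝓝 0)) :
    Tendsto (fun m => ∑ i ∈ s, f i m * c i) l (𝓝 0) := by
  have h := tendsto_finsetSum s fun i hi => (hf i hi).mul_const (c i)
  simp only [zero_mul, sum_const_zero] at h
  refine h.congr fun m => ?_
  have hAB : ∑ i ∈ s, (A m - x i * B m) * c i = 0 := by
    simp only [sub_mul, sum_sub_distrib, ← mul_sum, hc, mul_assoc, mul_left_comm _ (B m),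
      hxc, mul_zero, sub_zero]
  rw [sum_congr rfl fun i _ => sub_mul (f i m) _ (c i), sum_sub_distrib, hAB, sub_zero]

section Increments

variable {u v w : ℕ → ℝ}

theorem tendsto_sub_sub_of_tendsto_succ_sub
    (hu : Tendsto (fun n => u (n + 1) - u n) atTop (𝓝 0)) (i : ℕ) :
    Tendsto (fun m => u m - u (m - i)) atTop (𝓝 0) := by
  induction i with
  | zero => simp
  | succ i ih =>
    have hstep := hu.comp (tendsto_sub_atTop_nat (i + 1))
    simpa using (ih.add hstep).congr' <| by
      filter_upwards [eventually_ge_atTop (i + 1)] with m hm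
      simp only [Function.comp_apply, show m - (i + 1) + 1 = m - i by omega]
      ring

theorem tendsto_sub_sub_add_mul_of_succ_sub (hvw : ∀ n, v (n + 1) - v n = w (n + 1))
    (hw : ∀ i, Tendsto (fun m => w m - w (m - i)) atTop (𝓝 0)) (j : ℕ) :
    Tendsto (fun m => v (m - j) - (v m - j * w m)) atTop (𝓝 0) := by
  induction j with
  | zero => simp
  | succ j ih =>
    simpa using (ih.add (hw j)).congr' <| by
      filter_upwards [eventually_ge_atTop (j + 1)] with m hm
      have hsucc := hvw (m - (j + 1))
      rw [show m - (j + 1) + 1 = m - j by omega] at hsucc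
      linarith

end Increments

theorem κ_succ_sub (n : ℕ) : κ (n + 1) - κ n = 2 * H (n + 1) - 2 := by
  simp only [κ, H_succ]
  push_cast
  field_simp
  ring

theorem tendsto_κ_sub_sub (j : ℕ) :
    Tendsto (fun m => κ (m - j) - (κ m - j * (2 * H m - 2))) atTop (𝓝 0) := by
  have hH := tendsto_sub_sub_of_tendsto_succ_sub (u := H) <| by
    simpa only [H_succ, add_sub_cancel_left] using tendsto_one_div_add_atTop_nhds_zero_nat
  refine tendsto_sub_sub_add_mul_of_succ_sub κ_succ_sub (fun i => ?_) j
  simpa [← mul_sub] using (hH i).const_mul 2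

theorem two_mul_sum_κ (b : ℕ) :
    2 * ∑ j ∈ Icc 1 b, κ (j - 1) = b * κ b - b * (b - 1) := by
  induction b with
  | zero => simp
  | succ b ih =>
    rw [sum_Icc_succ_top (by omega), mul_add, ih, Nat.add_sub_cancel]
    simp only [κ, H_succ]
    push_cast
    field_simp
    ring

theorem sum_Icc_one_reflect {M : Type*} [AddCommMonoid M] (f : ℕ → M) (b : ℕ) :
    ∑ j ∈ Icc 1 b, f (b + 1 - j) = ∑ j ∈ Icc 1 b, f j :=
  sum_nbij' (fun j => b + 1 - j) (fun j => b + 1 - j) (by simp; omega) (by simp; omega)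
    (by simp; omega) (by simp; omega) fun _ _ => rfl

theorem two_mul_sum_mul_of_reflect {b : ℕ} {f : ℕ → ℝ}
    (hf : ∀ j ∈ Icc 1 b, f (b + 1 - j) = f j) :
    2 * ∑ j ∈ Icc 1 b, (j : ℝ) * f j = (b + 1) * ∑ j ∈ Icc 1 b, f j := by
  have hterm : ∀ j ∈ Icc 1 b,
      ((b + 1 - j : ℕ) : ℝ) * f (b + 1 - j) = (b + 1) * f j - j * f j := by
    intro j hj
    rw [hf j hj, Nat.cast_sub (by simp at hj; omega)]
    push_cast
    ring
  have h := sum_Icc_one_reflect (fun j => (j : ℝ) * f j) b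
  rw [sum_congr rfl hterm, sum_sub_distrib, ← mul_sum] at h
  linarith

noncomputable def κCoeff (b j : ℕ) : ℝ := (b : ℝ) - 1 + κ (j - 1) + κ (b - j) - κ b

theorem κCoeff_reflect {b j : ℕ} (hj : j ∈ Icc 1 b) : κCoeff b (b + 1 - j) = κCoeff b j := by
  simp only [mem_Icc] at hj
  rw [κCoeff, κCoeff, show b + 1 - j - 1 = b - j by omega, show b - (b + 1 - j) = j - 1 by omega]
  ring

theorem sum_κCoeff (b : ℕ) : ∑ j ∈ Icc 1 b, κCoeff b j = 0 := by
  have hrefl : ∑ j ∈ Icc 1 b, κ (b - j) = ∑ j ∈ Icc 1 b, κ (j - 1) := by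
    simpa [Nat.sub_sub] using sum_Icc_one_reflect (fun j => κ (j - 1)) b
  simp only [κCoeff, sum_sub_distrib, sum_add_distrib, hrefl, sum_const, Nat.card_Icc,
    Nat.add_sub_cancel, nsmul_eq_mul]
  linarith [two_mul_sum_κ b]

theorem sum_mul_κCoeff (b : ℕ) : ∑ j ∈ Icc 1 b, (j : ℝ) * κCoeff b j = 0 := by
  have h := two_mul_sum_mul_of_reflect fun j hj => κCoeff_reflect (b := b) hj
  rw [sum_κCoeff, mul_zero] at h
  linarith

theorem kappa_sum_tendsto_zero (b : ℕ) :
    Filter.Tendsto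
      (fun m : ℕ => ∑ j ∈ Finset.Icc 1 b,
        κ (m - j) * ((b : ℝ) - 1 + κ (j - 1) + κ (b - j) - κ b))
      Filter.atTop (𝓝 0) :=
  tendsto_sum_mul_of_affine_approx (Icc 1 b) (c := κCoeff b) (sum_κCoeff b) (sum_mul_κCoeff b)
    fun j _ => tendsto_κ_sub_sub j
end

section
/- For every fixed nonnegative integer b, the quantity Λ(a,b) := ∑_{j=1}^{b} κ_{j+a−1} · (b − 1 + κ_{j−1} + κ_{b−j} − κ_b) tends to 0 as a → ∞. -/
/-!
Write the summand as `κ_{a+i} · d_i` with `i = j - 1` and `d_i = b - 1 + κ_i + κ_{b-1-i} - κ_b`.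
The QuickSort recurrence `κ_b = b - 1 + (1/b) ∑_{i<b} (κ_i + κ_{b-1-i})` says that `∑ d_i = 0`,
and since `d_i = d_{b-1-i}` also `∑ i d_i = 0`. So only the non-affine part of `i ↦ κ_{a+i}` is
seen by the weights `d_i`. As `κ_{n+1} - κ_n = 2 H_{n+1} - 2` and `H_{a+i} - H_a → 0`, this part tends to `0`.
-/

open Finset Filter Topology

theorem tendsto_sum_mul_of_moments_eq_zero {s : Finset ℕ} {f g w : ℕ → ℝ}
    (h₀ : ∑ i ∈ s, w i = 0) (h₁ : ∑ i ∈ s, (i : ℝ) * w i = 0)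
    (hf : ∀ i ∈ s, Tendsto (fun a => f (i + a) - f a - i * g a) atTop (𝓝 0)) :
    Tendsto (fun a => ∑ i ∈ s, f (i + a) * w i) atTop (𝓝 0) := by
  have hsplit : ∀ a, ∑ i ∈ s, f (i + a) * w i =
      ∑ i ∈ s, (f (i + a) - f a - i * g a) * w i
        + f a * ∑ i ∈ s, w i + g a * ∑ i ∈ s, (i : ℝ) * w i := by
    intro a
    simp only [Finset.mul_sum, ← Finset.sum_add_distrib]
    exact Finset.sum_congr rfl fun i _ => by ring
  simp only [hsplit, h₀, h₁, mul_zero, add_zero]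
  simpa using tendsto_finsetSum s fun i hi => (hf i hi).mul_const (w i)

theorem sum_range_mul_eq_of_symm {b : ℕ} {w : ℕ → ℝ} (hw : ∀ i < b, w (b - 1 - i) = w i) :
    2 * ∑ i ∈ range b, (i : ℝ) * w i = (b - 1) * ∑ i ∈ range b, w i := by
  have hrefl : ∑ i ∈ range b, (i : ℝ) * w i = ∑ i ∈ range b, ((b : ℝ) - 1 - i) * w i := by
    rw [← Finset.sum_range_reflect]
    refine Finset.sum_congr rfl fun i hi => ?_
    have hib := Finset.mem_range.mp hi
    rw [hw i hib, Nat.cast_sub (by omega), Nat.cast_sub (by omega)]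
    ring
  rw [two_mul, Finset.mul_sum]
  nth_rewrite 2 [hrefl]
  rw [← Finset.sum_add_distrib]
  exact Finset.sum_congr rfl fun i _ => by ring

theorem κ_succ (n : ℕ) : κ (n + 1) = κ n + (2 * H (n + 1) - 2) := by
  simp only [κ, H_succ]
  push_cast
  field_simp
  ring

theorem two_mul_sum_range_κ (b : ℕ) :
    2 * ∑ i ∈ range b, κ i = b * κ b - b * ((b : ℝ) - 1) := by
  induction b with
  | zero => simp
  | succ n ih =>
    rw [Finset.sum_range_succ, mul_add, ih]
    simp only [κ, H_succ]
    push_cast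
    field_simp
    ring

theorem tendsto_H_add_sub (i : ℕ) : Tendsto (fun a => H (i + a) - H a) atTop (𝓝 0) := by
  induction i with
  | zero => simp
  | succ n ih =>
    have hinv : Tendsto (fun a : ℕ => 1 / ((a + n : ℕ) + 1 : ℝ)) atTop (𝓝 0) :=
      tendsto_one_div_add_atTop_nhds_zero_nat.comp (tendsto_add_atTop_nat n)
    have hstep := ih.add hinv
    rw [add_zero] at hstep
    refine hstep.congr fun a => ?_
    rw [add_right_comm n 1, H_succ]
    push_cast
    ring

theorem tendsto_κ_add_sub (i : ℕ) :
    Tendsto (fun a => κ (i + a) - κ a - i * (2 * H a - 2)) atTop (𝓝 0) := by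
  induction i with
  | zero => simp
  | succ n ih =>
    have hstep := ih.add ((tendsto_H_add_sub (n + 1)).const_mul 2)
    rw [mul_zero, add_zero] at hstep
    refine hstep.congr fun a => ?_
    rw [add_right_comm n 1, κ_succ]
    push_cast
    ring

/-- The weight of `κ_{j+a-1}` in `Λ(a,b)`, with `i = j - 1`. -/
noncomputable def κDefect (b i : ℕ) : ℝ := b - 1 + κ i + κ (b - 1 - i) - κ b

theorem sum_κDefect (b : ℕ) : ∑ i ∈ range b, κDefect b i = 0 := by
  have hrefl := Finset.sum_range_reflect κ b
  have hsum := two_mul_sum_range_κ b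
  simp only [κDefect, Finset.sum_sub_distrib, Finset.sum_add_distrib, Finset.sum_const,
    Finset.card_range, nsmul_eq_mul, hrefl]
  linarith

theorem sum_mul_κDefect (b : ℕ) : ∑ i ∈ range b, (i : ℝ) * κDefect b i = 0 := by
  have hsymm : ∀ i < b, κDefect b (b - 1 - i) = κDefect b i := fun i hi => by
    rw [κDefect, κDefect, Nat.sub_sub_self (by omega)]
    ring
  have := sum_range_mul_eq_of_symm hsymm
  rw [sum_κDefect, mul_zero] at this
  linarith

theorem lambda_tendsto_zero (b : ℕ) :
    Filter.Tendsto
      (fun a : ℕ => ∑ j ∈ Finset.Icc 1 b,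
        κ (j + a - 1) * ((b : ℝ) - 1 + κ (j - 1) + κ (b - j) - κ b))
      Filter.atTop (𝓝 0) := by
  have hreindex : ∀ a : ℕ, ∑ i ∈ range b, κ (i + a) * κDefect b i =
      ∑ j ∈ Icc 1 b, κ (j + a - 1) * ((b : ℝ) - 1 + κ (j - 1) + κ (b - j) - κ b) := by
    intro a
    rw [← Finset.Ico_add_one_right_eq_Icc, Finset.sum_Ico_eq_sum_range, add_tsub_cancel_right]
    refine Finset.sum_congr rfl fun i _ => ?_
    rw [κDefect, add_assoc 1 i a, Nat.add_sub_cancel_left, Nat.add_sub_cancel_left, Nat.sub_add_eq]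
  exact (tendsto_sum_mul_of_moments_eq_zero (sum_κDefect b) (sum_mul_κDefect b)
    fun i _ => tendsto_κ_add_sub i).congr hreindex
end
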